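/- arXiv:2307.02727 — 4 statements merged into one kernel-verified Lean document; each statement's English description precedes it below -/
import Mathlib

section
/- Positivity preserving property of the discrete porosity (boundedness): under the stated assumptions, the sequence (Ψ_n) produced by the implicit Euler porosity scheme satisfies φ_{0*} ≤ Ψ_n < 1 for every n ≥ 0. -/
/-!
Rewriting the implicit Euler step as `Ψₙ₊₁ - Ψₙ = D (1 - Ψₙ₊₁)` with `D ≥ 0` gives
`1 - Ψₙ₊₁ = (1 - Ψₙ) / (1 + D)`: the distance to `1` stays positive, hence so does the increment,
and the porosity increases from `φ₀ ≥ φ_{0*}` while staying below `1`.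
-/

theorem le_and_lt_one_of_sub_eq_mul_one_sub {a b D : ℝ} (hD : 0 ≤ D) (ha : a < 1)
    (hstep : b - a = D * (1 - b)) : a ≤ b ∧ b < 1 := by
  have hb : b < 1 := by nlinarith
  exact ⟨by nlinarith, hb⟩

theorem lt_one_and_monotone_of_sub_eq_mul_one_sub {Ψ : ℕ → ℝ} (h0 : Ψ 0 < 1)
    (hstep : ∀ n, ∃ D, 0 ≤ D ∧ Ψ (n + 1) - Ψ n = D * (1 - Ψ (n + 1))) :
    (∀ n, Ψ n < 1) ∧ Monotone Ψ := by
  have step_bounds : ∀ n, Ψ n < 1 → Ψ n ≤ Ψ (n + 1) ∧ Ψ (n + 1) < 1 := fun n hn ↦ by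
    obtain ⟨D, hD, h⟩ := hstep n
    exact le_and_lt_one_of_sub_eq_mul_one_sub hD hn h
  have lt_one : ∀ n, Ψ n < 1 := fun n ↦ by
    induction n with
    | zero => exact h0
    | succ n ih => exact (step_bounds n ih).2
  exact ⟨lt_one, monotone_nat_of_le_succ fun n ↦ (step_bounds n (lt_one n)).1⟩

theorem one_sub_one_div_one_add_nonneg {x : ℝ} (hx : 0 ≤ x) : 0 ≤ 1 - 1 / (1 + x) := by
  rw [sub_nonneg, div_le_one (by positivity)]
  linarith

theorem stmt_2_general (α kc a0 ρs : ℝ) (hα : 0 < α) (hkc : 0 < kc) (ha0 : 0 < a0)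
    (hρs : 0 < ρs)
    (ks : ℝ → ℝ) (hks : ∀ s, 0 < ks s)
    (Δt : ℝ) (hΔt : 0 < Δt)
    (φlo φhi φ0 : ℝ) (hφhi : φhi < 1)
    (hφ0lo : φlo ≤ φ0) (hφ0hi : φ0 ≤ φhi)
    (Z C Ψ : ℕ → ℝ) (hΨ0 : Ψ 0 = φ0)
    (hscheme : ∀ n : ℕ,
      (Ψ (n + 1) - Ψ n) / Δt =
        (α * kc * a0 / ρs) * (1 - 1 / (1 + ks (Z n) / kc))
          * ((1 - Ψ (n + 1)) / (1 - φ0)) * max 0 (min (C n) 1)) :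
    ∀ n : ℕ, φlo ≤ Ψ n ∧ Ψ n < 1 := by
  have hφ0 : 0 < 1 - φ0 := by linarith
  have hstep : ∀ n, ∃ D, 0 ≤ D ∧ Ψ (n + 1) - Ψ n = D * (1 - Ψ (n + 1)) := fun n ↦ by
    have hrate := one_sub_one_div_one_add_nonneg (div_pos (hks (Z n)) hkc).le
    have hC : 0 ≤ max 0 (min (C n) 1) := le_max_left _ _
    refine ⟨Δt * (α * kc * a0 / ρs) * (1 - 1 / (1 + ks (Z n) / kc))
      * max 0 (min (C n) 1) / (1 - φ0), by positivity, ?_⟩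
    rw [← mul_div_cancel₀ (Ψ (n + 1) - Ψ n) hΔt.ne', hscheme n]
    ring
  obtain ⟨lt_one, mono⟩ := lt_one_and_monotone_of_sub_eq_mul_one_sub (by linarith) hstep
  exact fun n ↦ ⟨hφ0lo.trans (hΨ0 ▸ mono (Nat.zero_le n)), lt_one n⟩

/-- Positivity preserving property of the discrete porosity (boundedness):
the sequence `Ψ` produced by the implicit Euler porosity scheme satisfies
`φ_{0*} ≤ Ψ n < 1` for every `n ≥ 0`. -/
theorem stmt_2 (α kc a0 ρs : ℝ) (hα : 0 < α) (hkc : 0 < kc) (ha0 : 0 < a0)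
    (hρs : 0 < ρs)
    (ks : ℝ → ℝ) (hks : ∀ s, 0 < ks s)
    (Δt : ℝ) (hΔt : 0 < Δt)
    (φlo φhi φ0 : ℝ) (hφlo : 0 < φlo) (hφlohi : φlo ≤ φhi) (hφhi : φhi < 1)
    (hφ0lo : φlo ≤ φ0) (hφ0hi : φ0 ≤ φhi)
    (Z C Ψ : ℕ → ℝ) (hΨ0 : Ψ 0 = φ0)
    (hscheme : ∀ n : ℕ,
      (Ψ (n + 1) - Ψ n) / Δt =
        (α * kc * a0 / ρs) * (1 - 1 / (1 + ks (Z n) / kc))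
          * ((1 - Ψ (n + 1)) / (1 - φ0)) * max 0 (min (C n) 1)) :
    ∀ n : ℕ, φlo ≤ Ψ n ∧ Ψ n < 1 :=
  stmt_2_general α kc a0 ρs hα hkc ha0 hρs ks hks Δt hΔt φlo φhi φ0 hφhi hφ0lo hφ0hi Z C Ψ hΨ0
    hscheme
end

section
/- Positivity preserving property of the discrete porosity (difference quotient bound): under the stated assumptions, the sequence (Ψ_n) produced by the implicit Euler porosity scheme satisfies 0 ≤ (Ψ_{n+1} − Ψ_n)/Δt < α k_c a_0 / (ρ_s (1 − φ_0)) for every n ≥ 0. -/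
/-!
Writing `b_n = Δt χ f_n C̄_n / (1 - φ₀) ≥ 0` with `f_n = 1 - 1/(1 + k_s/k_c) ∈ (0, 1)`, the implicit
scheme reads `Ψ_{n+1} - Ψ_n = b_n (1 - Ψ_{n+1})`, i.e. `1 - Ψ_{n+1} = (1 - Ψ_n) / (1 + b_n)`.
Hence `Ψ` increases and stays below `1`, so `(1 - Ψ_{n+1}) / (1 - φ₀) ∈ [0, 1]` and the
difference quotient `χ f_n ((1 - Ψ_{n+1}) / (1 - φ₀)) C̄_n` lies in `[0, χ)`; finally
`χ ≤ χ / (1 - φ₀)` because `0 < 1 - φ₀ ≤ 1`.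
-/

lemma le_and_le_one_of_implicit_step {b x y : ℝ} (hb : 0 ≤ b) (hstep : y - x = b * (1 - y))
    (hx : x ≤ 1) : x ≤ y ∧ y ≤ 1 := by
  have hsolved : (1 - y) * (1 + b) = 1 - x := by linear_combination -hstep
  have hy : 0 ≤ 1 - y := nonneg_of_mul_nonneg_left (hsolved ▸ sub_nonneg.2 hx) (by linarith)
  exact ⟨by nlinarith, by linarith⟩

section ImplicitRelaxation

variable {Ψ b : ℕ → ℝ}

lemma implicit_relaxation_le_one (hb : ∀ n, 0 ≤ b n)
    (hstep : ∀ n, Ψ (n + 1) - Ψ n = b n * (1 - Ψ (n + 1))) (h0 : Ψ 0 ≤ 1) (n : ℕ) : Ψ n ≤ 1 := by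
  induction n with
  | zero => exact h0
  | succ n ih => exact (le_and_le_one_of_implicit_step (hb n) (hstep n) ih).2

lemma implicit_relaxation_monotone (hb : ∀ n, 0 ≤ b n)
    (hstep : ∀ n, Ψ (n + 1) - Ψ n = b n * (1 - Ψ (n + 1))) (h0 : Ψ 0 ≤ 1) : Monotone Ψ :=
  monotone_nat_of_le_succ fun n =>
    (le_and_le_one_of_implicit_step (hb n) (hstep n)
      (implicit_relaxation_le_one hb hstep h0 n)).1

end ImplicitRelaxation

lemma one_sub_one_div_one_add_mem_Ioo {r : ℝ} (hr : 0 < r) : 1 - 1 / (1 + r) ∈ Set.Ioo 0 1 := by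
  have h : 1 / (1 + r) ∈ Set.Ioo 0 1 :=
    ⟨by positivity, (div_lt_one (by linarith)).2 (by linarith)⟩
  exact ⟨by linarith [h.2], by linarith [h.1]⟩

lemma max_zero_min_one_mem_Icc (c : ℝ) : max 0 (min c 1) ∈ Set.Icc (0 : ℝ) 1 :=
  ⟨le_max_left _ _, max_le zero_le_one (min_le_right _ _)⟩

lemma mul_mul_mul_lt_self {χ f g c : ℝ} (hχ : 0 < χ) (hf : f ∈ Set.Ico 0 1)
    (hg : g ∈ Set.Icc 0 1) (hc : c ∈ Set.Icc 0 1) : χ * f * g * c < χ := by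
  have hgc : g * c ≤ 1 := mul_le_one₀ hg.2 hc.1 hc.2
  have hfgc : f * (g * c) < 1 :=
    (mul_le_of_le_one_right hf.1 hgc).trans_lt hf.2
  calc χ * f * g * c = χ * (f * (g * c)) := by ring
    _ < χ := mul_lt_of_lt_one_right hχ hfgc

theorem stmt_3_general (α kc a0 ρs : ℝ) (hα : 0 < α) (hkc : 0 < kc) (ha0 : 0 < a0)
    (hρs : 0 < ρs)
    (ks : ℝ → ℝ) (hks : ∀ s, 0 < ks s)
    (Δt : ℝ) (hΔt : 0 < Δt)
    (φlo φhi φ0 : ℝ) (hφlo : 0 < φlo) (hφhi : φhi < 1)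
    (hφ0lo : φlo ≤ φ0) (hφ0hi : φ0 ≤ φhi)
    (Z C Ψ : ℕ → ℝ) (hΨ0 : Ψ 0 = φ0)
    (hscheme : ∀ n : ℕ,
      (Ψ (n + 1) - Ψ n) / Δt =
        (α * kc * a0 / ρs) * (1 - 1 / (1 + ks (Z n) / kc))
          * ((1 - Ψ (n + 1)) / (1 - φ0)) * max 0 (min (C n) 1)) :
    ∀ n : ℕ, 0 ≤ (Ψ (n + 1) - Ψ n) / Δt ∧
      (Ψ (n + 1) - Ψ n) / Δt < α * kc * a0 / (ρs * (1 - φ0)) := by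
  set χ := α * kc * a0 / ρs
  have hχ : 0 < χ := by positivity
  have h1φ : 0 < 1 - φ0 := by linarith
  have hf n := one_sub_one_div_one_add_mem_Ioo (div_pos (hks (Z n)) hkc)
  have hc n := max_zero_min_one_mem_Icc (C n)
  have hstep n : Ψ (n + 1) - Ψ n = Δt * χ * (1 - 1 / (1 + ks (Z n) / kc))
      * max 0 (min (C n) 1) / (1 - φ0) * (1 - Ψ (n + 1)) := by
    rw [(div_eq_iff hΔt.ne').1 (hscheme n)]; ring
  have hb n : 0 ≤ Δt * χ * (1 - 1 / (1 + ks (Z n) / kc)) * max 0 (min (C n) 1) / (1 - φ0) := by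
    have := (hf n).1; have := (hc n).1; positivity
  have hle_one := implicit_relaxation_le_one hb hstep (by linarith)
  have hmono := implicit_relaxation_monotone hb hstep (by linarith)
  intro n
  have hg : (1 - Ψ (n + 1)) / (1 - φ0) ∈ Set.Icc 0 1 :=
    ⟨div_nonneg (by linarith [hle_one (n + 1)]) h1φ.le,
      (div_le_one h1φ).2 (by linarith [hmono (Nat.zero_le (n + 1))])⟩
  rw [hscheme n, ← div_div]
  refine ⟨?_, (mul_mul_mul_lt_self hχ (Set.Ioo_subset_Ico_self (hf n)) hg (hc n)).trans_le
    (le_div_self hχ.le h1φ (by linarith))⟩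
  have := (hf n).1; have := hg.1; have := (hc n).1
  positivity

/-- Positivity preserving property of the discrete porosity (difference quotient
bound): the sequence `Ψ` produced by the implicit Euler porosity scheme satisfies
`0 ≤ (Ψ_{n+1} − Ψ_n)/Δt < α k_c a_0 / (ρ_s (1 − φ_0))` for every `n ≥ 0`. -/
theorem stmt_3 (α kc a0 ρs : ℝ) (hα : 0 < α) (hkc : 0 < kc) (ha0 : 0 < a0)
    (hρs : 0 < ρs)
    (ks : ℝ → ℝ) (hks : ∀ s, 0 < ks s)
    (Δt : ℝ) (hΔt : 0 < Δt)
    (φlo φhi φ0 : ℝ) (hφlo : 0 < φlo) (hφlohi : φlo ≤ φhi) (hφhi : φhi < 1)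
    (hφ0lo : φlo ≤ φ0) (hφ0hi : φ0 ≤ φhi)
    (Z C Ψ : ℕ → ℝ) (hΨ0 : Ψ 0 = φ0)
    (hscheme : ∀ n : ℕ,
      (Ψ (n + 1) - Ψ n) / Δt =
        (α * kc * a0 / ρs) * (1 - 1 / (1 + ks (Z n) / kc))
          * ((1 - Ψ (n + 1)) / (1 - φ0)) * max 0 (min (C n) 1)) :
    ∀ n : ℕ, 0 ≤ (Ψ (n + 1) - Ψ n) / Δt ∧
      (Ψ (n + 1) - Ψ n) / Δt < α * kc * a0 / (ρs * (1 - φ0)) :=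
  stmt_3_general α kc a0 ρs hα hkc ha0 hρs ks hks Δt hΔt φlo φhi φ0 hφlo hφhi hφ0lo hφ0hi Z C Ψ hΨ0
    hscheme
end

section
/- Error estimate for the discrete porosity (difference-quotient bound): there exists a constant C > 0, depending only on the parameters α, k_c, a_0, ρ_s, the final time Q, the area of Ω, the Lipschitz constant and the bounds k_{s1}, k_{s2} of k_s, the constants φ_{0*}, φ_0^*, and the stated bounds on φ, c_f, T and their time derivatives — but not on h, k, Δt, N_x, N_y, N, nor on the grid functions Z and C — such that for every m ≤ N − 1: Δt Σ_{n=0}^m ‖d_t E_φ^{n+1}‖_M² ≤ C Δt Σ_{n=0}^m ‖E_{c_f}^n‖_M² + C Δt Σ_{n=0}^m ‖E_T^n‖_M² + C Δt Σ_{n=0}^m ‖E_φ^{n+1}‖_M² + C (Δt)². -/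
/-- The discrete `M`-norm squared on a uniform `N_x × N_y` grid with mesh
widths `h, k`: `‖f‖_M² = Σ_{i=1}^{N_x} Σ_{j=1}^{N_y} h k f_{i,j}²`. -/
def normMsq (Nx Ny : ℕ) (h k : ℝ) (f : ℕ → ℕ → ℝ) : ℝ :=
  ∑ i ∈ Finset.Icc 1 Nx, ∑ j ∈ Finset.Icc 1 Ny, h * k * f i j ^ 2

/-- The `i`-th cell center of the uniform partition of `(L, R)` into `N` cells:
`L + (i − 1/2) (R − L)/N`. -/
noncomputable def cellCenter (L R : ℝ) (N : ℕ) (i : ℕ) : ℝ :=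
  L + ((i : ℝ) - 1 / 2) * ((R - L) / N)


lemma derivBound {f f' : ℝ → ℝ} {a b M : ℝ} (hab : a ≤ b)
    (hf : ∀ t ∈ Set.Icc a b, HasDerivAt f (f' t) t)
    (hM : ∀ t ∈ Set.Icc a b, |f' t| ≤ M) :
    |f b - f a| ≤ M * (b - a) := by
  have := norm_image_sub_le_of_norm_deriv_le_segment'
    (f' := f') (fun t ht => (hf t ht).hasDerivWithinAt)
    (fun t ht => hM t (Set.Ico_subset_Icc_self ht)) b (Set.right_mem_Icc.2 hab)
  simpa [Real.norm_eq_abs] using this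

lemma taylorBound {f f' f'' : ℝ → ℝ} {a b M : ℝ} (hab : a ≤ b)
    (hf : ∀ t ∈ Set.Icc a b, HasDerivAt f (f' t) t)
    (hf' : ∀ t ∈ Set.Icc a b, HasDerivAt f' (f'' t) t)
    (hM : ∀ t ∈ Set.Icc a b, |f'' t| ≤ M) :
    |f b - f a - (b - a) * f' b| ≤ M * (b - a) * (b - a) := by
  have hM0 : 0 ≤ M := le_trans (abs_nonneg _) (hM b (Set.right_mem_Icc.2 hab))
  have hg : ∀ t ∈ Set.Icc a b,
      HasDerivAt (fun s => f s - s * f' b) (f' t - f' b) t := by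
    intro t ht
    have := (hf t ht).sub ((hasDerivAt_id t).mul_const (f' b))
    simp only [id_eq, one_mul] at this
    exact this
  have hbd : ∀ t ∈ Set.Icc a b, |f' t - f' b| ≤ M * (b - a) := by
    intro t ht
    have h1 : |f' b - f' t| ≤ M * (b - t) :=
      derivBound ht.2 (fun s hs => hf' s ⟨le_trans ht.1 hs.1, hs.2⟩)
        (fun s hs => hM s ⟨le_trans ht.1 hs.1, hs.2⟩)
    rw [abs_sub_comm]
    exact h1.trans (by nlinarith [ht.1])
  have h2 := derivBound hab hg hbd
  have h3 : (f b - b * f' b) - (f a - a * f' b) = f b - f a - (b - a) * f' b := by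
    ring
  rw [h3] at h2
  linarith [h2]

lemma gBoundsLo {kc p : ℝ} (hkc : 0 < kc) (hp : 0 < p) : 0 ≤ 1 - 1/(1 + p/kc) := by
  have h1 : (0:ℝ) < 1 + p/kc := by positivity
  have : 1/(1+p/kc) ≤ 1 := by
    rw [div_le_one h1]; nlinarith [div_pos hp hkc]
  linarith

lemma gBoundsHi {kc p : ℝ} (hkc : 0 < kc) (hp : 0 < p) : 1 - 1/(1 + p/kc) ≤ 1 := by
  have h1 : (0:ℝ) < 1 + p/kc := by positivity
  have : 0 < 1/(1+p/kc) := by positivity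
  linarith

lemma gLip {kc p q : ℝ} (hkc : 0 < kc) (hp : 0 < p) (hq : 0 < q) :
    |(1 - 1/(1 + p/kc)) - (1 - 1/(1 + q/kc))| ≤ |p - q| / kc := by
  have h1 : (0:ℝ) < 1 + p/kc := by positivity
  have h2 : (0:ℝ) < 1 + q/kc := by positivity
  have heq : (1 - 1/(1 + p/kc)) - (1 - 1/(1 + q/kc))
      = (p - q)/(kc*((1+p/kc)*(1+q/kc))) := by
    field_simp
    ring
  rw [heq, abs_div, abs_of_pos (by positivity : (0:ℝ) < kc*((1+p/kc)*(1+q/kc)))]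
  have h3 : kc * ((1+p/kc)*(1+q/kc)) = kc + p + q + p*q/kc := by
    field_simp; ring
  exact div_le_div_of_nonneg_left (abs_nonneg _) hkc
    (by nlinarith [div_pos (mul_pos hp hq) hkc])

lemma clampLip {c d : ℝ} (h0 : 0 ≤ d) (h1 : d ≤ 1) :
    |max 0 (min c 1) - d| ≤ |c - d| := by
  rcases le_total c 0 with hc | hc
  · have hmin : min c 1 ≤ 0 := le_trans (min_le_left _ _) hc
    rw [max_eq_left hmin, zero_sub, abs_neg, abs_of_nonneg h0,
      abs_of_nonpos (by linarith : c - d ≤ 0)]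
    linarith
  · rcases le_total c 1 with hc1 | hc1
    · rw [min_eq_left hc1, max_eq_right hc]
    · rw [min_eq_right hc1, max_eq_right (zero_le_one),
        abs_of_nonneg (by linarith : (0:ℝ) ≤ 1 - d),
        abs_of_nonneg (by linarith : 0 ≤ c - d)]
      linarith

lemma cellCenterMem {L R : ℝ} {N : ℕ} (hN : 0 < N) (hLR : L < R) {i : ℕ}
    (hi : i ∈ Finset.Icc 1 N) : cellCenter L R N i ∈ Set.Icc L R := by
  obtain ⟨hi1, hi2⟩ := Finset.mem_Icc.1 hi
  have hN' : (0:ℝ) < N := Nat.cast_pos.2 hN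
  have hi1' : (1:ℝ) ≤ i := by exact_mod_cast hi1
  have hi2' : (i:ℝ) ≤ N := by exact_mod_cast hi2
  have hh : (0:ℝ) < (R - L)/N := div_pos (by linarith) hN'
  have hNh : (N:ℝ) * ((R - L)/N) = R - L := by field_simp
  unfold cellCenter
  constructor
  · nlinarith
  · nlinarith [mul_le_mul_of_nonneg_right hi2' (le_of_lt hh)]

lemma timeMem {Q : ℝ} {N : ℕ} (hQ : 0 < Q) (hN : 0 < N) {n : ℕ} (hn : n ≤ N) :
    (n:ℝ) * (Q/N) ∈ Set.Icc (0:ℝ) Q := by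
  have hN' : (0:ℝ) < N := Nat.cast_pos.2 hN
  have hn' : (n:ℝ) ≤ N := by exact_mod_cast hn
  have hQN : (0:ℝ) ≤ Q/N := by positivity
  have hNQ : (N:ℝ) * (Q/N) = Q := by field_simp
  constructor
  · positivity
  · nlinarith [mul_le_mul_of_nonneg_right hn' hQN]

lemma normMsq_nonneg {Nx Ny : ℕ} {h k : ℝ} (hh : 0 ≤ h) (hk : 0 ≤ k)
    (f : ℕ → ℕ → ℝ) : 0 ≤ normMsq Nx Ny h k f :=
  Finset.sum_nonneg fun i _ => Finset.sum_nonneg fun j _ => by positivity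

lemma normMsqBound {Nx Ny : ℕ} {h k K e : ℝ} (hh : 0 ≤ h) (hk : 0 ≤ k)
    (hK : 0 ≤ K) (he : 0 ≤ e) (f a b c : ℕ → ℕ → ℝ)
    (H : ∀ i ∈ Finset.Icc 1 Nx, ∀ j ∈ Finset.Icc 1 Ny,
      f i j ^ 2 ≤ K * (a i j ^ 2 + b i j ^ 2 + c i j ^ 2 + e)) :
    normMsq Nx Ny h k f ≤
      K * (normMsq Nx Ny h k a + normMsq Nx Ny h k b + normMsq Nx Ny h k c)
        + K * e * (h * k * Nx * Ny) := by
  unfold normMsq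
  calc ∑ i ∈ Finset.Icc 1 Nx, ∑ j ∈ Finset.Icc 1 Ny, h * k * f i j ^ 2
      ≤ ∑ i ∈ Finset.Icc 1 Nx, ∑ j ∈ Finset.Icc 1 Ny,
          (K * (h * k * a i j ^ 2) + K * (h * k * b i j ^ 2)
            + K * (h * k * c i j ^ 2) + K * e * (h * k)) := by
        apply Finset.sum_le_sum
        intro i hi
        apply Finset.sum_le_sum
        intro j hj
        have h1 : h * k * f i j ^ 2 ≤ h * k * (K * (a i j ^ 2 + b i j ^ 2 + c i j ^ 2 + e)) :=
          mul_le_mul_of_nonneg_left (H i hi j hj) (by positivity)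
        nlinarith [h1]
    _ = K * ((∑ i ∈ Finset.Icc 1 Nx, ∑ j ∈ Finset.Icc 1 Ny, h * k * a i j ^ 2)
          + (∑ i ∈ Finset.Icc 1 Nx, ∑ j ∈ Finset.Icc 1 Ny, h * k * b i j ^ 2)
          + (∑ i ∈ Finset.Icc 1 Nx, ∑ j ∈ Finset.Icc 1 Ny, h * k * c i j ^ 2))
          + K * e * (h * k * Nx * Ny) := by
        simp only [Finset.sum_add_distrib, ← Finset.mul_sum, Finset.sum_const,
          Nat.card_Icc, nsmul_eq_mul]
        push_cast
        ring

lemma absTerm1 {g c x : ℝ} (hg0 : 0 ≤ g) (hg1 : g ≤ 1) (hc0 : 0 ≤ c) (hc1 : c ≤ 1) :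
    |g * c * x| ≤ |x| := by
  rw [abs_mul, abs_mul, abs_of_nonneg hg0, abs_of_nonneg hc0]
  nlinarith [abs_nonneg x, mul_le_one₀ hg1 hc0 hc1, mul_nonneg hg0 hc0]

lemma absTerm2 {w gZ gT Cb cfb : ℝ} (hw0 : 0 ≤ w) (hw1 : w ≤ 1)
    (hCb0 : 0 ≤ Cb) (hCb1 : Cb ≤ 1) (hgT0 : 0 ≤ gT) (hgT1 : gT ≤ 1) :
    |w * ((gZ - gT) * Cb + gT * (Cb - cfb))| ≤ |gZ - gT| + |Cb - cfb| := by
  rw [abs_mul, abs_of_nonneg hw0]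
  have u : |(gZ - gT) * Cb + gT * (Cb - cfb)| ≤ |gZ - gT| * Cb + gT * |Cb - cfb| := by
    calc |(gZ - gT) * Cb + gT * (Cb - cfb)|
        ≤ |(gZ - gT) * Cb| + |gT * (Cb - cfb)| := abs_add_le _ _
      _ = |gZ - gT| * Cb + gT * |Cb - cfb| := by
          rw [abs_mul, abs_mul, abs_of_nonneg hCb0, abs_of_nonneg hgT0]
  nlinarith [abs_nonneg (gZ - gT), abs_nonneg (Cb - cfb),
    abs_nonneg ((gZ - gT) * Cb + gT * (Cb - cfb))]

lemma combineK {B K Lkkc Mφ Mc MT dt X a b c : ℝ}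
    (hB : 0 < B) (hLkkc : 0 ≤ Lkkc) (hMφ0 : 0 ≤ Mφ) (hMc0 : 0 ≤ Mc) (hMT0 : 0 ≤ MT)
    (hdt : 0 < dt)
    (hK : K = B * (1 + Lkkc) + B * (Lkkc * MT + Mc) + Mφ + 1)
    (ha : 0 ≤ a) (hb : 0 ≤ b) (hc : 0 ≤ c)
    (hX : X ≤ B * (Lkkc * (b + MT * dt) + (c + Mc * dt) + a) + Mφ * dt) :
    X ≤ K * (a + b + c + dt) := by
  have qq : 0 ≤ B * (Lkkc * MT + Mc) :=
    mul_nonneg hB.le (add_nonneg (mul_nonneg hLkkc hMT0) hMc0)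
  have qB : 0 ≤ B * Lkkc := mul_nonneg hB.le hLkkc
  have k1 : B ≤ K := by rw [hK]; nlinarith
  have k2 : B * Lkkc ≤ K := by rw [hK]; nlinarith
  have k3 : B * Lkkc * MT + B * Mc + Mφ ≤ K := by rw [hK]; nlinarith
  nlinarith [mul_le_mul_of_nonneg_right k1 ha,
    mul_le_mul_of_nonneg_right k2 hb,
    mul_le_mul_of_nonneg_right k1 hc,
    mul_le_mul_of_nonneg_right k3 hdt.le]

lemma sqCombine {X K a b c d : ℝ} (ha : 0 ≤ a) (hb : 0 ≤ b) (hc : 0 ≤ c) (hd : 0 ≤ d)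
    (hK : 0 ≤ K) (h : |X| ≤ K * (a + b + c + d)) :
    X ^ 2 ≤ 4 * K ^ 2 * (a ^ 2 + b ^ 2 + c ^ 2 + d ^ 2) := by
  have h2 := pow_le_pow_left₀ (abs_nonneg X) h 2
  rw [sq_abs] at h2
  nlinarith [sq_nonneg (a - b), sq_nonneg (a - c), sq_nonneg (a - d), sq_nonneg (b - c),
    sq_nonneg (b - d), sq_nonneg (c - d), sq_nonneg K, sq_nonneg (a + b + c + d)]

lemma pointwiseKey {A B K Lk kc Mφ Mc MT dt ks1 : ℝ} {ks : ℝ → ℝ}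
    (hkc : 0 < kc) (hks1 : 0 < ks1) (hksb : ∀ s, ks1 ≤ ks s)
    (hksLip : ∀ a b, |ks a - ks b| ≤ Lk * |a - b|)
    (hA : 0 < A) (hB : 0 < B) (hdt : 0 < dt) (hLkkc : 0 ≤ Lk / kc)
    (hMφ0 : 0 ≤ Mφ) (hMc0 : 0 ≤ Mc) (hMT0 : 0 ≤ MT)
    (hKdef : K = B * (1 + Lk / kc) + B * (Lk / kc * MT + Mc) + Mφ + 1)
    (P' P Zv Cgv φa φb φ0 cfa cfb Ta Tb φtb : ℝ)
    (hS : (P' - P) / dt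
      = A * (1 - 1 / (1 + ks Zv / kc)) * ((1 - P') / (1 - φ0)) * max 0 (min Cgv 1))
    (hpde : φtb = A * (1 - 1 / (1 + ks Tb / kc)) * ((1 - φb) / (1 - φ0)) * cfb)
    (hBD : A / (1 - φ0) ≤ B) (hD0 : 0 < 1 - φ0)
    (htay : |φb - φa - dt * φtb| ≤ Mφ * dt * dt)
    (hTd : |Tb - Ta| ≤ MT * dt) (hcfd : |cfb - cfa| ≤ Mc * dt)
    (hcfa0 : 0 ≤ cfa) (hcfa1 : cfa ≤ 1) (hφb0 : 0 ≤ φb) (hφb1 : φb ≤ 1) :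
    (((P' - φb) - (P - φa)) / dt) ^ 2
      ≤ 4 * K ^ 2 * ((P' - φb) ^ 2 + (Zv - Ta) ^ 2 + (Cgv - cfa) ^ 2 + dt ^ 2) := by
  have hksZ : 0 < ks Zv := lt_of_lt_of_le hks1 (hksb _)
  have hksT : 0 < ks Tb := lt_of_lt_of_le hks1 (hksb _)
  have hgZ0 := gBoundsLo hkc hksZ
  have hgZ1 := gBoundsHi hkc hksZ
  have hgT0 := gBoundsLo hkc hksT
  have hgT1 := gBoundsHi hkc hksT
  have hCb0 : 0 ≤ max 0 (min Cgv 1) := le_max_left _ _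
  have hCb1 : max 0 (min Cgv 1) ≤ 1 := max_le zero_le_one (min_le_right _ _)
  have hLk : 0 ≤ Lk := by
    have h := hksLip 0 1
    have h2 : |(0:ℝ) - 1| = 1 := by norm_num
    rw [h2, mul_one] at h
    exact le_trans (abs_nonneg _) h
  set gZ := 1 - 1 / (1 + ks Zv / kc) with hgZdef
  set gT := 1 - 1 / (1 + ks Tb / kc) with hgTdef
  set Cb := max 0 (min Cgv 1) with hCbdef
  set D := 1 - φ0 with hDdef
  clear_value gZ gT Cb D
  have hK0 : 0 ≤ K := by
    rw [hKdef]
    have q1 : 0 ≤ B * (1 + Lk / kc) := mul_nonneg hB.le (by linarith)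
    have q2 : 0 ≤ B * (Lk / kc * MT + Mc) :=
      mul_nonneg hB.le (add_nonneg (mul_nonneg hLkkc hMT0) hMc0)
    linarith
  -- remainder term
  have hR : |φtb - (φb - φa) / dt| ≤ Mφ * dt := by
    have e2 : φtb - (φb - φa) / dt = -((φb - φa - dt * φtb) / dt) := by
      field_simp
      ring
    rw [e2, abs_neg, abs_div, abs_of_pos hdt, div_le_iff₀ hdt]
    calc |φb - φa - dt * φtb| ≤ Mφ * dt * dt := htay
      _ = Mφ * dt * dt := rfl
  -- Lipschitz bound for the temperature term
  have hgLip : |gZ - gT| ≤ Lk / kc * (|Zv - Ta| + MT * dt) := by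
    calc |gZ - gT| ≤ |ks Zv - ks Tb| / kc := by
          rw [hgZdef, hgTdef]; exact gLip hkc hksZ hksT
      _ ≤ (Lk * |Zv - Tb|) / kc := div_le_div_of_nonneg_right (hksLip _ _) hkc.le
      _ ≤ (Lk * (|Zv - Ta| + MT * dt)) / kc := by
          apply div_le_div_of_nonneg_right ?_ hkc.le
          apply mul_le_mul_of_nonneg_left ?_ hLk
          calc |Zv - Tb| ≤ |Zv - Ta| + |Ta - Tb| := abs_sub_le _ _ _
            _ ≤ |Zv - Ta| + MT * dt := by
                rw [abs_sub_comm Ta Tb]; linarith [hTd]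
      _ = Lk / kc * (|Zv - Ta| + MT * dt) := by ring
  -- concentration term
  have hcLip : |Cb - cfb| ≤ |Cgv - cfa| + Mc * dt := by
    calc |Cb - cfb| ≤ |Cb - cfa| + |cfa - cfb| := abs_sub_le _ _ _
      _ ≤ |Cgv - cfa| + Mc * dt := by
          apply add_le_add
          · rw [hCbdef]; exact clampLip hcfa0 hcfa1
          · rw [abs_sub_comm]; exact hcfd
  -- the product term
  have hADpos : 0 < A / D := div_pos hA hD0
  have hY : |(1 - φb) * ((gZ - gT) * Cb + gT * (Cb - cfb)) - gZ * Cb * (P' - φb)|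
      ≤ |gZ - gT| + |Cb - cfb| + |P' - φb| := by
    have t1 := abs_sub ((1 - φb) * ((gZ - gT) * Cb + gT * (Cb - cfb)))
      (gZ * Cb * (P' - φb))
    have t2 : |gZ * Cb * (P' - φb)| ≤ |P' - φb| := absTerm1 hgZ0 hgZ1 hCb0 hCb1
    have t3 : |(1 - φb) * ((gZ - gT) * Cb + gT * (Cb - cfb))|
        ≤ |gZ - gT| + |Cb - cfb| :=
      absTerm2 (by linarith) (by linarith) hCb0 hCb1 hgT0 hgT1
    linarith
  have hAbsProd : |(A / D) * ((1 - φb) * ((gZ - gT) * Cb + gT * (Cb - cfb)) - gZ * Cb * (P' - φb))|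
      ≤ B * (|gZ - gT| + |Cb - cfb| + |P' - φb|) := by
    rw [abs_mul, abs_of_pos hADpos]
    exact mul_le_mul hBD hY (abs_nonneg _) hB.le
  have s1 : |gZ - gT| + |Cb - cfb| + |P' - φb|
      ≤ Lk / kc * (|Zv - Ta| + MT * dt) + (|Cgv - cfa| + Mc * dt) + |P' - φb| := by
    linarith
  have s2 : |(A / D) * ((1 - φb) * ((gZ - gT) * Cb + gT * (Cb - cfb)) - gZ * Cb * (P' - φb))|
      ≤ B * (Lk / kc * (|Zv - Ta| + MT * dt) + (|Cgv - cfa| + Mc * dt) + |P' - φb|) :=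
    hAbsProd.trans (mul_le_mul_of_nonneg_left s1 hB.le)
  -- assemble the absolute-value bound
  have hmain : |(A / D) * ((1 - φb) * ((gZ - gT) * Cb + gT * (Cb - cfb)) - gZ * Cb * (P' - φb))
        + (φtb - (φb - φa) / dt)|
      ≤ K * (|P' - φb| + |Zv - Ta| + |Cgv - cfa| + dt) := by
    refine le_trans (abs_add_le _ _) ?_
    refine combineK hB hLkkc hMφ0 hMc0 hMT0 hdt hKdef (abs_nonneg _) (abs_nonneg _)
      (abs_nonneg _) ?_
    linarith
  -- the algebraic decomposition of the difference quotient
  have hkey1 : ((P' - φb) - (P - φa)) / dt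
      = (A / D) * ((1 - φb) * ((gZ - gT) * Cb + gT * (Cb - cfb)) - gZ * Cb * (P' - φb))
        + (φtb - (φb - φa) / dt) := by
    have e1 : ((P' - φb) - (P - φa)) / dt = (P' - P) / dt - (φb - φa) / dt := by
      ring
    rw [e1, hS, hpde]
    field_simp
    ring
  rw [hkey1]
  have hfin := sqCombine (abs_nonneg (P' - φb)) (abs_nonneg (Zv - Ta))
    (abs_nonneg (Cgv - cfa)) hdt.le hK0 hmain
  rwa [sq_abs, sq_abs, sq_abs] at hfin

set_option maxHeartbeats 1200000 in
/-- Error estimate for the discrete porosity (difference-quotient bound): there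
is a constant `C > 0`, independent of the mesh sizes, the time step and the grid
functions `Z`, `Cg`, such that for every `m ≤ N − 1`,
`Δt Σ_{n=0}^m ‖d_t E_φ^{n+1}‖_M² ≤ C Δt Σ_{n=0}^m ‖E_{c_f}^n‖_M²
  + C Δt Σ_{n=0}^m ‖E_T^n‖_M² + C Δt Σ_{n=0}^m ‖E_φ^{n+1}‖_M² + C (Δt)²`. -/
theorem stmt_6
    -- physical parameters
    (α kc a0 ρs : ℝ) (hα : 0 < α) (hkc : 0 < kc) (ha0 : 0 < a0) (hρs : 0 < ρs)
    -- the surface reaction rate: Lipschitz and bounded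
    (ks : ℝ → ℝ) (Lk ks1 ks2 : ℝ) (hks1 : 0 < ks1)
    (hksb : ∀ s, ks1 ≤ ks s ∧ ks s ≤ ks2)
    (hksLip : ∀ a b, |ks a - ks b| ≤ Lk * |a - b|)
    -- the rectangular domain and the final time
    (Llx Lrx Lly Lry Q : ℝ) (hΩx : Llx < Lrx) (hΩy : Lly < Lry) (hQ : 0 < Q)
    -- the exact solutions and their time derivatives
    (φ cf T φt φtt cft Tt : ℝ → ℝ → ℝ → ℝ) (Mφ Mc MT : ℝ)
    (φlo φhi : ℝ) (hφlo : 0 < φlo) (hφlohi : φlo ≤ φhi) (hφhi : φhi < 1)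
    -- smoothness in time with bounded derivatives
    (hφderiv : ∀ x ∈ Set.Icc Llx Lrx, ∀ y ∈ Set.Icc Lly Lry, ∀ t ∈ Set.Icc (0 : ℝ) Q,
      HasDerivAt (fun s => φ x y s) (φt x y t) t ∧
        HasDerivAt (fun s => φt x y s) (φtt x y t) t ∧ |φtt x y t| ≤ Mφ)
    (hcfderiv : ∀ x ∈ Set.Icc Llx Lrx, ∀ y ∈ Set.Icc Lly Lry, ∀ t ∈ Set.Icc (0 : ℝ) Q,
      HasDerivAt (fun s => cf x y s) (cft x y t) t ∧ |cft x y t| ≤ Mc)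
    (hTderiv : ∀ x ∈ Set.Icc Llx Lrx, ∀ y ∈ Set.Icc Lly Lry, ∀ t ∈ Set.Icc (0 : ℝ) Q,
      HasDerivAt (fun s => T x y s) (Tt x y t) t ∧ |Tt x y t| ≤ MT)
    -- pointwise bounds
    (hcfbound : ∀ x ∈ Set.Icc Llx Lrx, ∀ y ∈ Set.Icc Lly Lry, ∀ t ∈ Set.Icc (0 : ℝ) Q,
      0 ≤ cf x y t ∧ cf x y t ≤ 1)
    (hφbound : ∀ x ∈ Set.Icc Llx Lrx, ∀ y ∈ Set.Icc Lly Lry, ∀ t ∈ Set.Icc (0 : ℝ) Q,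
      0 ≤ φ x y t ∧ φ x y t ≤ 1)
    (hφ0bound : ∀ x ∈ Set.Icc Llx Lrx, ∀ y ∈ Set.Icc Lly Lry,
      φlo ≤ φ x y 0 ∧ φ x y 0 ≤ φhi)
    -- the continuous porosity equation
    (hφeq : ∀ x ∈ Set.Icc Llx Lrx, ∀ y ∈ Set.Icc Lly Lry, ∀ t ∈ Set.Icc (0 : ℝ) Q,
      φt x y t = (α * kc * a0 / ρs) * (1 - 1 / (1 + ks (T x y t) / kc))
        * ((1 - φ x y t) / (1 - φ x y 0)) * cf x y t) :
    ∃ C > (0 : ℝ), ∀ (Nx Ny N : ℕ), 0 < Nx → 0 < Ny → 0 < N →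
      ∀ Z Cg Ψ : ℕ → ℕ → ℕ → ℝ,
      -- discrete initial porosity
      (∀ i ∈ Finset.Icc 1 Nx, ∀ j ∈ Finset.Icc 1 Ny,
        Ψ 0 i j = φ (cellCenter Llx Lrx Nx i) (cellCenter Lly Lry Ny j) 0) →
      -- the implicit Euler porosity scheme with clamped concentration
      (∀ n < N, ∀ i ∈ Finset.Icc 1 Nx, ∀ j ∈ Finset.Icc 1 Ny,
        (Ψ (n + 1) i j - Ψ n i j) / (Q / N) =
          (α * kc * a0 / ρs) * (1 - 1 / (1 + ks (Z n i j) / kc))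
            * ((1 - Ψ (n + 1) i j) / (1 - Ψ 0 i j)) * max 0 (min (Cg n i j) 1)) →
      ∀ m : ℕ, m ≤ N - 1 →
        (Q / N) * ∑ n ∈ Finset.range (m + 1),
            normMsq Nx Ny ((Lrx - Llx) / Nx) ((Lry - Lly) / Ny)
              (fun i j =>
                ((Ψ (n + 1) i j -
                    φ (cellCenter Llx Lrx Nx i) (cellCenter Lly Lry Ny j)
                      (((n : ℝ) + 1) * (Q / N))) -
                  (Ψ n i j -
                    φ (cellCenter Llx Lrx Nx i) (cellCenter Lly Lry Ny j)
                      ((n : ℝ) * (Q / N)))) / (Q / N)) ≤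
          C * (Q / N) * ∑ n ∈ Finset.range (m + 1),
              normMsq Nx Ny ((Lrx - Llx) / Nx) ((Lry - Lly) / Ny)
                (fun i j => Cg n i j -
                  cf (cellCenter Llx Lrx Nx i) (cellCenter Lly Lry Ny j)
                    ((n : ℝ) * (Q / N)))
            + C * (Q / N) * ∑ n ∈ Finset.range (m + 1),
                normMsq Nx Ny ((Lrx - Llx) / Nx) ((Lry - Lly) / Ny)
                  (fun i j => Z n i j -
                    T (cellCenter Llx Lrx Nx i) (cellCenter Lly Lry Ny j)
                      ((n : ℝ) * (Q / N)))
            + C * (Q / N) * ∑ n ∈ Finset.range (m + 1),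
                normMsq Nx Ny ((Lrx - Llx) / Nx) ((Lry - Lly) / Ny)
                  (fun i j => Ψ (n + 1) i j -
                    φ (cellCenter Llx Lrx Nx i) (cellCenter Lly Lry Ny j)
                      (((n : ℝ) + 1) * (Q / N)))
            + C * (Q / N) ^ 2 := by
  -- abbreviations for the constants
  set A := α * kc * a0 / ρs with hAdef
  have hA : 0 < A := by positivity
  have hφhi1 : (0:ℝ) < 1 - φhi := by linarith
  set B := A / (1 - φhi) with hBdef
  have hB : 0 < B := div_pos hA hφhi1
  have hLk : 0 ≤ Lk := by
    have h := hksLip 0 1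
    have h2 : |(0:ℝ) - 1| = 1 := by norm_num
    rw [h2, mul_one] at h
    exact le_trans (abs_nonneg _) h
  have hxl : Llx ∈ Set.Icc Llx Lrx := Set.left_mem_Icc.2 (le_of_lt hΩx)
  have hyl : Lly ∈ Set.Icc Lly Lry := Set.left_mem_Icc.2 (le_of_lt hΩy)
  have h0Q : (0:ℝ) ∈ Set.Icc (0:ℝ) Q := Set.left_mem_Icc.2 (le_of_lt hQ)
  have hMφ0 : 0 ≤ Mφ := le_trans (abs_nonneg _) (hφderiv Llx hxl Lly hyl 0 h0Q).2.2
  have hMc0 : 0 ≤ Mc := le_trans (abs_nonneg _) (hcfderiv Llx hxl Lly hyl 0 h0Q).2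
  have hMT0 : 0 ≤ MT := le_trans (abs_nonneg _) (hTderiv Llx hxl Lly hyl 0 h0Q).2
  set K := B * (1 + Lk / kc) + B * (Lk / kc * MT + Mc) + Mφ + 1 with hKdef
  have hLkkc : 0 ≤ Lk / kc := div_nonneg hLk (le_of_lt hkc)
  have hK1 : 1 ≤ K := by
    rw [hKdef]
    have p1 : 0 ≤ B * (1 + Lk / kc) := mul_nonneg hB.le (by linarith)
    have p2 : 0 ≤ B * (Lk / kc * MT + Mc) :=
      mul_nonneg hB.le (add_nonneg (mul_nonneg hLkkc hMT0) hMc0)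
    linarith
  have hK0 : 0 < K := lt_of_lt_of_le one_pos hK1
  have hArea : 0 < (Lrx - Llx) * (Lry - Lly) :=
    mul_pos (by linarith) (by linarith)
  refine ⟨4 * K ^ 2 * (1 + (Lrx - Llx) * (Lry - Lly) * Q), by positivity, ?_⟩
  set C := 4 * K ^ 2 * (1 + (Lrx - Llx) * (Lry - Lly) * Q) with hCdef
  have hAQ : 0 ≤ (Lrx - Llx) * (Lry - Lly) * Q := le_of_lt (mul_pos hArea hQ)
  have hC4 : 4 * K ^ 2 ≤ C := by
    rw [hCdef]
    calc 4 * K ^ 2 = 4 * K ^ 2 * 1 := by ring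
      _ ≤ 4 * K ^ 2 * (1 + (Lrx - Llx) * (Lry - Lly) * Q) := by
          apply mul_le_mul_of_nonneg_left (by linarith) (by positivity)
  intro Nx Ny N hNx hNy hN Z Cg Ψ hΨ0 hsch m hm
  have hN' : (0:ℝ) < N := Nat.cast_pos.2 hN
  set dt := Q / (N:ℝ) with hdtdef
  have hdt : 0 < dt := by positivity
  have hmN : m + 1 ≤ N := by omega
  have hh : (0:ℝ) < (Lrx - Llx) / Nx := div_pos (by linarith) (Nat.cast_pos.2 hNx)
  have hk : (0:ℝ) < (Lry - Lly) / Ny := div_pos (by linarith) (Nat.cast_pos.2 hNy)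
  -- pointwise estimate
  have key : ∀ n, n ≤ m → ∀ i ∈ Finset.Icc 1 Nx, ∀ j ∈ Finset.Icc 1 Ny,
      (((Ψ (n + 1) i j - φ (cellCenter Llx Lrx Nx i) (cellCenter Lly Lry Ny j)
            (((n:ℝ) + 1) * dt)) -
        (Ψ n i j - φ (cellCenter Llx Lrx Nx i) (cellCenter Lly Lry Ny j)
            ((n:ℝ) * dt))) / dt) ^ 2
      ≤ 4 * K ^ 2 *
        ((Ψ (n + 1) i j - φ (cellCenter Llx Lrx Nx i) (cellCenter Lly Lry Ny j)
            (((n:ℝ) + 1) * dt)) ^ 2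
          + (Z n i j - T (cellCenter Llx Lrx Nx i) (cellCenter Lly Lry Ny j)
              ((n:ℝ) * dt)) ^ 2
          + (Cg n i j - cf (cellCenter Llx Lrx Nx i) (cellCenter Lly Lry Ny j)
              ((n:ℝ) * dt)) ^ 2
          + dt ^ 2) := by
    intro n hn i hi j hj
    set x := cellCenter Llx Lrx Nx i with hxdef
    set y := cellCenter Lly Lry Ny j with hydef
    have hxm : x ∈ Set.Icc Llx Lrx := cellCenterMem hNx hΩx hi
    have hym : y ∈ Set.Icc Lly Lry := cellCenterMem hNy hΩy hj
    have hnN : n < N := by omega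
    have hn1N : n + 1 ≤ N := by omega
    have ht : (n:ℝ) * dt ∈ Set.Icc (0:ℝ) Q := timeMem hQ hN (le_of_lt hnN)
    have ht' : ((n:ℝ) + 1) * dt ∈ Set.Icc (0:ℝ) Q := by
      have h := timeMem hQ hN hn1N
      push_cast at h
      exact h
    set t := (n:ℝ) * dt with htdef
    set t' := ((n:ℝ) + 1) * dt with ht'def
    have htt' : t ≤ t' := by
      rw [htdef, ht'def]
      have := mul_le_mul_of_nonneg_right
        (by linarith : (n:ℝ) ≤ (n:ℝ) + 1) hdt.le
      linarith
    have hdteq : t' - t = dt := by rw [htdef, ht'def]; ring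
    have hsub : Set.Icc t t' ⊆ Set.Icc (0:ℝ) Q := Set.Icc_subset_Icc ht.1 ht'.2
    -- time-derivative bounds
    have hTd : |T x y t' - T x y t| ≤ MT * dt := by
      have h := derivBound (f := fun s => T x y s) (f' := fun s => Tt x y s) htt'
        (fun s hs => (hTderiv x hxm y hym s (hsub hs)).1)
        (fun s hs => (hTderiv x hxm y hym s (hsub hs)).2)
      rwa [hdteq] at h
    have hcfd : |cf x y t' - cf x y t| ≤ Mc * dt := by
      have h := derivBound (f := fun s => cf x y s) (f' := fun s => cft x y s) htt'
        (fun s hs => (hcfderiv x hxm y hym s (hsub hs)).1)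
        (fun s hs => (hcfderiv x hxm y hym s (hsub hs)).2)
      rwa [hdteq] at h
    have htay : |φ x y t' - φ x y t - dt * φt x y t'| ≤ Mφ * dt * dt := by
      have h := taylorBound (f := fun s => φ x y s) (f' := fun s => φt x y s)
        (f'' := fun s => φtt x y s) htt'
        (fun s hs => (hφderiv x hxm y hym s (hsub hs)).1)
        (fun s hs => (hφderiv x hxm y hym s (hsub hs)).2.1)
        (fun s hs => (hφderiv x hxm y hym s (hsub hs)).2.2)
      rwa [hdteq] at h
    -- the scheme and the PDE
    have hS := hsch n hnN i hi j hj
    have hP0 : Ψ 0 i j = φ x y 0 := hΨ0 i hi j hj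
    rw [hP0] at hS
    obtain ⟨hφ0lo, hφ0hi⟩ := hφ0bound x hxm y hym
    have hD0 : 0 < 1 - φ x y 0 := by linarith
    have hBD : A / (1 - φ x y 0) ≤ B := by
      rw [hBdef]
      exact div_le_div_of_nonneg_left hA.le hφhi1 (by linarith)
    have hpde : φt x y t' = A * (1 - 1 / (1 + ks (T x y t') / kc))
        * ((1 - φ x y t') / (1 - φ x y 0)) * cf x y t' := hφeq x hxm y hym t' ht'
    obtain ⟨hcfa0, hcfa1⟩ := hcfbound x hxm y hym t ht
    obtain ⟨hφb0, hφb1⟩ := hφbound x hxm y hym t' ht'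
    exact pointwiseKey hkc hks1 (fun s => (hksb s).1) hksLip hA hB hdt hLkkc
      hMφ0 hMc0 hMT0 hKdef (Ψ (n + 1) i j) (Ψ n i j) (Z n i j) (Cg n i j)
      (φ x y t) (φ x y t') (φ x y 0) (cf x y t) (cf x y t') (T x y t) (T x y t')
      (φt x y t') hS hpde hBD hD0 htay hTd hcfd hcfa0 hcfa1 hφb0 hφb1
  -- per-time-level norm bound
  have hlevel : ∀ n ∈ Finset.range (m + 1),
      normMsq Nx Ny ((Lrx - Llx) / Nx) ((Lry - Lly) / Ny)
        (fun i j => ((Ψ (n + 1) i j - φ (cellCenter Llx Lrx Nx i) (cellCenter Lly Lry Ny j)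
              (((n:ℝ) + 1) * dt)) -
            (Ψ n i j - φ (cellCenter Llx Lrx Nx i) (cellCenter Lly Lry Ny j)
              ((n:ℝ) * dt))) / dt)
      ≤ 4 * K ^ 2 *
          (normMsq Nx Ny ((Lrx - Llx) / Nx) ((Lry - Lly) / Ny)
            (fun i j => Ψ (n + 1) i j - φ (cellCenter Llx Lrx Nx i) (cellCenter Lly Lry Ny j)
              (((n:ℝ) + 1) * dt))
          + normMsq Nx Ny ((Lrx - Llx) / Nx) ((Lry - Lly) / Ny)
            (fun i j => Z n i j - T (cellCenter Llx Lrx Nx i) (cellCenter Lly Lry Ny j)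
              ((n:ℝ) * dt))
          + normMsq Nx Ny ((Lrx - Llx) / Nx) ((Lry - Lly) / Ny)
            (fun i j => Cg n i j - cf (cellCenter Llx Lrx Nx i) (cellCenter Lly Lry Ny j)
              ((n:ℝ) * dt)))
        + 4 * K ^ 2 * dt ^ 2 * ((Lrx - Llx) / Nx * ((Lry - Lly) / Ny) * Nx * Ny) := by
    intro n hn
    have hn' : n ≤ m := by
      have := Finset.mem_range.1 hn; omega
    exact normMsqBound hh.le hk.le (by positivity) (sq_nonneg dt) _ _ _ _
      (fun i hi j hj => key n hn' i hi j hj)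
  -- the constant area term
  have hareaeq : (Lrx - Llx) / Nx * ((Lry - Lly) / Ny) * Nx * Ny
      = (Lrx - Llx) * (Lry - Lly) := by
    field_simp
  rw [hareaeq] at hlevel
  -- sum over time levels
  have hsum := Finset.sum_le_sum hlevel
  rw [Finset.sum_add_distrib, Finset.sum_const, Finset.card_range, nsmul_eq_mul,
    ← Finset.mul_sum, Finset.sum_add_distrib, Finset.sum_add_distrib] at hsum
  push_cast at hsum
  -- name the three big sums
  set Sφ := ∑ n ∈ Finset.range (m + 1),
      normMsq Nx Ny ((Lrx - Llx) / Nx) ((Lry - Lly) / Ny)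
        (fun i j => Ψ (n + 1) i j - φ (cellCenter Llx Lrx Nx i) (cellCenter Lly Lry Ny j)
          (((n:ℝ) + 1) * dt)) with hSφdef
  set ST := ∑ n ∈ Finset.range (m + 1),
      normMsq Nx Ny ((Lrx - Llx) / Nx) ((Lry - Lly) / Ny)
        (fun i j => Z n i j - T (cellCenter Llx Lrx Nx i) (cellCenter Lly Lry Ny j)
          ((n:ℝ) * dt)) with hSTdef
  set Sc := ∑ n ∈ Finset.range (m + 1),
      normMsq Nx Ny ((Lrx - Llx) / Nx) ((Lry - Lly) / Ny)
        (fun i j => Cg n i j - cf (cellCenter Llx Lrx Nx i) (cellCenter Lly Lry Ny j)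
          ((n:ℝ) * dt)) with hScdef
  set SF := ∑ n ∈ Finset.range (m + 1),
      normMsq Nx Ny ((Lrx - Llx) / Nx) ((Lry - Lly) / Ny)
        (fun i j => ((Ψ (n + 1) i j - φ (cellCenter Llx Lrx Nx i) (cellCenter Lly Lry Ny j)
              (((n:ℝ) + 1) * dt)) -
            (Ψ n i j - φ (cellCenter Llx Lrx Nx i) (cellCenter Lly Lry Ny j)
              ((n:ℝ) * dt))) / dt) with hSFdef
  have hSφ0 : 0 ≤ Sφ := by
    rw [hSφdef]
    exact Finset.sum_nonneg fun n _ => normMsq_nonneg hh.le hk.le _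
  have hST0 : 0 ≤ ST := by
    rw [hSTdef]
    exact Finset.sum_nonneg fun n _ => normMsq_nonneg hh.le hk.le _
  have hSc0 : 0 ≤ Sc := by
    rw [hScdef]
    exact Finset.sum_nonneg fun n _ => normMsq_nonneg hh.le hk.le _
  have hmdt : ((m:ℝ) + 1) * dt ≤ Q := by
    have hm' : ((m:ℝ) + 1) ≤ N := by exact_mod_cast hmN
    have hNQ : (N:ℝ) * dt = Q := by rw [hdtdef]; field_simp
    calc ((m:ℝ) + 1) * dt ≤ (N:ℝ) * dt := mul_le_mul_of_nonneg_right hm' hdt.le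
      _ = Q := hNQ
  have hsum' : SF ≤ 4 * K ^ 2 * (Sφ + ST + Sc)
      + ((m:ℝ) + 1) * (4 * K ^ 2 * dt ^ 2 * ((Lrx - Llx) * (Lry - Lly))) := by
    exact hsum
  calc dt * SF ≤ dt * (4 * K ^ 2 * (Sφ + ST + Sc)
        + ((m:ℝ) + 1) * (4 * K ^ 2 * dt ^ 2 * ((Lrx - Llx) * (Lry - Lly)))) :=
      mul_le_mul_of_nonneg_left hsum' hdt.le
    _ = 4 * K ^ 2 * (dt * Sc) + 4 * K ^ 2 * (dt * ST) + 4 * K ^ 2 * (dt * Sφ)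
        + (4 * K ^ 2 * ((Lrx - Llx) * (Lry - Lly))) * (((m:ℝ) + 1) * dt) * dt ^ 2 := by
      ring
    _ ≤ C * (dt * Sc) + C * (dt * ST) + C * (dt * Sφ) + C * dt ^ 2 := by
      have e1 : 4 * K ^ 2 * (dt * Sc) ≤ C * (dt * Sc) :=
        mul_le_mul_of_nonneg_right hC4 (mul_nonneg hdt.le hSc0)
      have e2 : 4 * K ^ 2 * (dt * ST) ≤ C * (dt * ST) :=
        mul_le_mul_of_nonneg_right hC4 (mul_nonneg hdt.le hST0)
      have e3 : 4 * K ^ 2 * (dt * Sφ) ≤ C * (dt * Sφ) :=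
        mul_le_mul_of_nonneg_right hC4 (mul_nonneg hdt.le hSφ0)
      have w1 : (4 * K ^ 2 * ((Lrx - Llx) * (Lry - Lly))) * (((m:ℝ) + 1) * dt)
          ≤ (4 * K ^ 2 * ((Lrx - Llx) * (Lry - Lly))) * Q :=
        mul_le_mul_of_nonneg_left hmdt (by positivity)
      have w2 : (4 * K ^ 2 * ((Lrx - Llx) * (Lry - Lly))) * Q ≤ C := by
        rw [hCdef]
        have e : (4 * K ^ 2 * ((Lrx - Llx) * (Lry - Lly))) * Q
            = 4 * K ^ 2 * ((Lrx - Llx) * (Lry - Lly) * Q) := by ring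
        rw [e]
        apply mul_le_mul_of_nonneg_left (by linarith) (by positivity)
      have e4 : (4 * K ^ 2 * ((Lrx - Llx) * (Lry - Lly))) * (((m:ℝ) + 1) * dt) * dt ^ 2
          ≤ C * dt ^ 2 :=
        mul_le_mul_of_nonneg_right (le_trans w1 w2) (sq_nonneg dt)
      linarith
    _ = C * dt * Sc + C * dt * ST + C * dt * Sφ + C * dt ^ 2 := by ring
end

section
/- Joint Lipschitz bound for the reaction rate: let k_c > 0 and let k_s : ℝ → ℝ be Lipschitz continuous with constant L and satisfy k_s(s) ≥ k_{s1} > 0 for all s. Define R(c, T) = k_c (1 − 1/(1 + k_s(T)/k_c)) c. Then for all real T₁, T₂ and all c₁, c₂ ∈ [0,1], |R(c₁, T₁) − R(c₂, T₂)| ≤ k_c |c₁ − c₂| + L (1 + k_{s1}/k_c)^{-2} |T₁ − T₂|. -/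
/-!
Write `R(c, T) = g(k_s(T)) c` with the effective rate constant `g(k) = k_c (1 - 1/(1 + k/k_c))`.
Splitting `g₁ c₁ - g₂ c₂ = g₁ (c₁ - c₂) + (g₁ - g₂) c₂`, the first term is controlled by
`0 ≤ g ≤ k_c` and the second by `|c₂| ≤ 1` together with
`g(k₁) - g(k₂) = (k₁ - k₂) / ((1 + k₁/k_c)(1 + k₂/k_c))`, whose denominator is at least
`(1 + k_{s1}/k_c)²`.
-/

lemma abs_mul_sub_mul_le {a b x y A D : ℝ} (ha : |a| ≤ A) (hab : |a - b| ≤ D) (hy : |y| ≤ 1) :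
    |a * x - b * y| ≤ A * |x - y| + D :=
  calc |a * x - b * y| = |a * (x - y) + (a - b) * y| := by ring_nf
    _ ≤ |a| * |x - y| + |a - b| * |y| := by
      rw [← abs_mul, ← abs_mul]; exact abs_add_le _ _
    _ ≤ A * |x - y| + D * 1 := by
      gcongr
      exact (abs_nonneg _).trans hab
    _ = A * |x - y| + D := by rw [mul_one]

/-- Equal to `kc * k / (kc + k)`: mass transfer and surface reaction act as resistances
`1/kc` and `1/k` in series. -/
noncomputable def effectiveRateConstant (kc k : ℝ) : ℝ := kc * (1 - 1 / (1 + k / kc))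

section effectiveRateConstant

variable {kc : ℝ}

lemma effectiveRateConstant_nonneg (hkc : 0 < kc) {k : ℝ} (hk : 0 ≤ k) :
    0 ≤ effectiveRateConstant kc k := by
  have : 1 / (1 + k / kc) ≤ 1 := div_le_one_of_le₀ (by linarith [div_nonneg hk hkc.le])
    (by positivity)
  unfold effectiveRateConstant
  nlinarith

lemma effectiveRateConstant_le (hkc : 0 < kc) {k : ℝ} (hk : 0 ≤ k) :
    effectiveRateConstant kc k ≤ kc := by
  have : 0 ≤ 1 / (1 + k / kc) := by positivity
  unfold effectiveRateConstant
  nlinarith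

lemma abs_effectiveRateConstant_le (hkc : 0 < kc) {k : ℝ} (hk : 0 ≤ k) :
    |effectiveRateConstant kc k| ≤ kc :=
  abs_le.mpr ⟨by linarith [effectiveRateConstant_nonneg hkc hk], effectiveRateConstant_le hkc hk⟩

lemma effectiveRateConstant_sub (hkc : kc ≠ 0) {k₁ k₂ : ℝ} (h₁ : kc + k₁ ≠ 0)
    (h₂ : kc + k₂ ≠ 0) :
    effectiveRateConstant kc k₁ - effectiveRateConstant kc k₂ =
      (k₁ - k₂) / ((1 + k₁ / kc) * (1 + k₂ / kc)) := by
  have h₁' : 1 + k₁ / kc ≠ 0 := by rw [one_add_div hkc]; exact div_ne_zero h₁ hkc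
  have h₂' : 1 + k₂ / kc ≠ 0 := by rw [one_add_div hkc]; exact div_ne_zero h₂ hkc
  unfold effectiveRateConstant
  field_simp
  ring

lemma abs_effectiveRateConstant_sub_le (hkc : 0 < kc) {m k₁ k₂ : ℝ} (hm : 0 < kc + m)
    (h₁ : m ≤ k₁) (h₂ : m ≤ k₂) :
    |effectiveRateConstant kc k₁ - effectiveRateConstant kc k₂| ≤
      |k₁ - k₂| / (1 + m / kc) ^ 2 := by
  have hm' : 0 < 1 + m / kc := by rw [one_add_div hkc.ne']; positivity
  have hk₁ : m / kc ≤ k₁ / kc := by gcongr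
  have hk₂ : m / kc ≤ k₂ / kc := by gcongr
  rw [effectiveRateConstant_sub hkc.ne' (by linarith) (by linarith), abs_div,
    abs_of_pos (a := (1 + k₁ / kc) * (1 + k₂ / kc)) (by nlinarith)]
  gcongr
  rw [sq]
  gcongr
  linarith

end effectiveRateConstant

theorem stmt_10_general (kc L ks1 : ℝ) (hkc : 0 < kc) (hks1 : 0 < ks1)
    (ks : ℝ → ℝ) (hlb : ∀ s, ks1 ≤ ks s)
    (hlip : ∀ a b, |ks a - ks b| ≤ L * |a - b|)
    (T₁ T₂ c₁ c₂ : ℝ) (hc₂ : c₂ ∈ Set.Icc (0 : ℝ) 1) :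
    |kc * (1 - 1 / (1 + ks T₁ / kc)) * c₁ - kc * (1 - 1 / (1 + ks T₂ / kc)) * c₂| ≤
      kc * |c₁ - c₂| + L * ((1 + ks1 / kc) ^ 2)⁻¹ * |T₁ - T₂| := by
  have hks : ∀ s, 0 ≤ ks s := fun s => hks1.le.trans (hlb s)
  have hc₂' : |c₂| ≤ 1 := abs_le.mpr ⟨by linarith [hc₂.1], hc₂.2⟩
  have hrate : |effectiveRateConstant kc (ks T₁) - effectiveRateConstant kc (ks T₂)| ≤
      L * ((1 + ks1 / kc) ^ 2)⁻¹ * |T₁ - T₂| :=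
    calc _ ≤ |ks T₁ - ks T₂| / (1 + ks1 / kc) ^ 2 :=
          abs_effectiveRateConstant_sub_le hkc (by linarith) (hlb T₁) (hlb T₂)
      _ ≤ L * |T₁ - T₂| / (1 + ks1 / kc) ^ 2 := by gcongr; exact hlip T₁ T₂
      _ = L * ((1 + ks1 / kc) ^ 2)⁻¹ * |T₁ - T₂| := by ring
  exact abs_mul_sub_mul_le (abs_effectiveRateConstant_le hkc (hks T₁)) hrate hc₂'

/-- Joint Lipschitz bound for the reaction rate
`R(c, T) = k_c (1 − 1/(1 + k_s(T)/k_c)) c`: for all real `T₁, T₂` and all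
`c₁, c₂ ∈ [0,1]`,
`|R(c₁,T₁) − R(c₂,T₂)| ≤ k_c |c₁ − c₂| + L (1 + k_{s1}/k_c)⁻² |T₁ − T₂|`. -/
theorem stmt_10 (kc L ks1 : ℝ) (hkc : 0 < kc) (hks1 : 0 < ks1)
    (ks : ℝ → ℝ) (hlb : ∀ s, ks1 ≤ ks s)
    (hlip : ∀ a b, |ks a - ks b| ≤ L * |a - b|)
    (T₁ T₂ c₁ c₂ : ℝ) (hc₁ : c₁ ∈ Set.Icc (0 : ℝ) 1) (hc₂ : c₂ ∈ Set.Icc (0 : ℝ) 1) :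
    |kc * (1 - 1 / (1 + ks T₁ / kc)) * c₁ - kc * (1 - 1 / (1 + ks T₂ / kc)) * c₂| ≤
      kc * |c₁ - c₂| + L * ((1 + ks1 / kc) ^ 2)⁻¹ * |T₁ - T₂| :=
  stmt_10_general kc L ks1 hkc hks1 ks hlb hlip T₁ T₂ c₁ c₂ hc₂
end
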